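/- Let L be a convex body in ℝⁿ containing the origin in its interior, let e be a unit vector, and let {L_t}, t ∈ [-1,1], be the Steiner shadow system of L along e. Assume that the function t ↦ V((L_t)°)^{-1} is convex on [-1,1] (Meyer–Reisner), that V((L_t)*) ≤ V((L_t)°) with equality characterizing the Santaló point, and that V((L_0)*) ≥ V((L_1)*). If the barycentre of L° is the origin, then V(L°) ≤ V((L_t)°) for all t ∈ [-1,1]. -/

import Mathlib

open Set MeasureTheory

noncomputable def pol {n : ℕ} (M : Set (EuclideanSpace ℝ (Fin n))) :
    Set (EuclideanSpace ℝ (Fin n)) :=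
  {x | ∀ y ∈ M, (inner ℝ x y : ℝ) ≤ 1}

noncomputable def vol {n : ℕ} (M : Set (EuclideanSpace ℝ (Fin n))) : ℝ :=
  (volume M).toReal

/-!
Reflection in `e^⊥` is a linear isometry carrying `L = L_1` to `L_{-1}`, so
`V((L_{-1})°) = V(L°)`, and by Meyer–Reisner convexity `V((L_t)°)⁻¹` is at most this common
endpoint value. To invert the inequality, every `L_t` is squeezed between two balls centred at
the origin: membership of a fixed point in `L_t` is convex in `t`, and each fibre of `L_t` stays
inside the symmetric hull of the corresponding fibre of `L`.
-/

open scoped RealInnerProductSpace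

section ShadowSystem

variable {E : Type*} [NormedAddCommGroup E] [InnerProductSpace ℝ E] {e : E}

theorem exists_add_smul_of_norm_eq_one (he : ‖e‖ = 1) (x : E) :
    ∃ y : E, ∃ s : ℝ, ⟪y, e⟫ = 0 ∧ x = y + s • e := by
  refine ⟨x - ⟪x, e⟫ • e, ⟪x, e⟫, ?_, (sub_add_cancel _ _).symm⟩
  rw [inner_sub_left, real_inner_smul_left, real_inner_self_eq_norm_sq, he]
  ring

theorem norm_add_smul_le_of_abs_le {y : E} {s c : ℝ} (hy : ⟪y, e⟫ = 0) (hsc : |s| ≤ |c|) :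
    ‖y + s • e‖ ≤ ‖y + c • e‖ := by
  have hsq : ∀ r : ℝ, ‖y + r • e‖ ^ 2 = ‖y‖ ^ 2 + r ^ 2 * ‖e‖ ^ 2 := fun r => by
    rw [norm_add_sq_real, real_inner_smul_right, hy, norm_smul, mul_pow, Real.norm_eq_abs, sq_abs]
    ring
  rw [← pow_le_pow_iff_left₀ (norm_nonneg _) (norm_nonneg _) two_ne_zero, hsq, hsq]
  linarith [mul_le_mul_of_nonneg_right (sq_le_sq.mpr hsc) (sq_nonneg ‖e‖)]

theorem reflection_orthogonal_singleton_add_smul {y : E} (hy : ⟪y, e⟫ = 0) (s : ℝ) :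
    (ℝ ∙ e)ᗮ.reflection (y + s • e) = y + (-s) • e := by
  have hy' : (ℝ ∙ e)ᗮ.reflection y = y :=
    (Submodule.reflection_eq_self_iff y).mpr (Submodule.mem_orthogonal_singleton_iff_inner_right.mpr
      (by rw [real_inner_comm, hy]))
  rw [map_add, map_smul, hy', Submodule.reflection_orthogonalComplement_singleton_eq_neg, smul_neg,
    neg_smul]

/-- Fibres `[z y, w y]` over `y ∈ P` at `t = 1`, translated along `e` by `-(1 - t)` times their
midpoint: `t = 0` gives the Steiner symmetral and `t = -1` the reflection in `e^⊥`. -/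
def shadowSystem (e : E) (P : Set E) (z w : E → ℝ) (t : ℝ) : Set E :=
  {x | x - ⟪x, e⟫ • e ∈ P ∧
    z (x - ⟪x, e⟫ • e) - (1 - t) * ((z (x - ⟪x, e⟫ • e) + w (x - ⟪x, e⟫ • e)) / 2) ≤ ⟪x, e⟫ ∧
    ⟪x, e⟫ ≤ w (x - ⟪x, e⟫ • e) - (1 - t) * ((z (x - ⟪x, e⟫ • e) + w (x - ⟪x, e⟫ • e)) / 2)}

variable {P : Set E} {z w : E → ℝ}

theorem mem_shadowSystem_add_smul (he : ‖e‖ = 1) {y : E} (hy : ⟪y, e⟫ = 0) {s t : ℝ} :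
    y + s • e ∈ shadowSystem e P z w t ↔
      y ∈ P ∧ z y - (1 - t) * ((z y + w y) / 2) ≤ s ∧ s ≤ w y - (1 - t) * ((z y + w y) / 2) := by
  have hs : ⟪y + s • e, e⟫ = s := by
    rw [inner_add_left, real_inner_smul_left, real_inner_self_eq_norm_sq, he, hy]
    ring
  simp only [shadowSystem, mem_ofPred_eq, hs, add_sub_cancel_right]

theorem convex_setOf_mem_shadowSystem (x : E) :
    Convex ℝ {t | x ∈ shadowSystem e P z w t} := by
  intro a ha b hb μ ν hμ hν hμν
  obtain rfl : ν = 1 - μ := by linarith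
  obtain ⟨hP, ha₁, ha₂⟩ := ha
  obtain ⟨-, hb₁, hb₂⟩ := hb
  refine ⟨hP, ?_, ?_⟩ <;> simp only [smul_eq_mul]
  · linarith [mul_le_mul_of_nonneg_left ha₁ hμ, mul_le_mul_of_nonneg_left hb₁ hν]
  · linarith [mul_le_mul_of_nonneg_left ha₂ hμ, mul_le_mul_of_nonneg_left hb₂ hν]

theorem shadowSystem_neg_one (he : ‖e‖ = 1) :
    shadowSystem e P z w (-1) = (ℝ ∙ e)ᗮ.reflection ⁻¹' shadowSystem e P z w 1 := by
  ext x
  obtain ⟨y, s, hy, rfl⟩ := exists_add_smul_of_norm_eq_one he x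
  rw [mem_preimage, reflection_orthogonal_singleton_add_smul hy, mem_shadowSystem_add_smul he hy,
    mem_shadowSystem_add_smul he hy]
  constructor <;> rintro ⟨hyP, h₁, h₂⟩ <;> exact ⟨hyP, by linarith, by linarith⟩

theorem closedBall_subset_shadowSystem (he : ‖e‖ = 1) {r t : ℝ}
    (hr : Metric.closedBall 0 r ⊆ shadowSystem e P z w 1) (ht : t ∈ Icc (-1 : ℝ) 1) :
    Metric.closedBall 0 r ⊆ shadowSystem e P z w t := by
  intro x hx
  have hneg : x ∈ shadowSystem e P z w (-1) := by
    rw [shadowSystem_neg_one he]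
    exact hr (by simpa using hx)
  exact (convex_setOf_mem_shadowSystem x).segment_subset hneg (hr hx)
    (by rwa [segment_eq_Icc (by norm_num)])

theorem shadowSystem_subset_closedBall (he : ‖e‖ = 1) {R t : ℝ}
    (hR : shadowSystem e P z w 1 ⊆ Metric.closedBall 0 R) (ht : t ∈ Icc (-1 : ℝ) 1) :
    shadowSystem e P z w t ⊆ Metric.closedBall 0 R := by
  intro x hx
  obtain ⟨y, s, hy, rfl⟩ := exists_add_smul_of_norm_eq_one he x
  obtain ⟨hyP, h₁, h₂⟩ := (mem_shadowSystem_add_smul he hy).mp hx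
  have hz : y + z y • e ∈ shadowSystem e P z w 1 :=
    (mem_shadowSystem_add_smul he hy).mpr ⟨hyP, by linarith, by linarith⟩
  have hw : y + w y • e ∈ shadowSystem e P z w 1 :=
    (mem_shadowSystem_add_smul he hy).mpr ⟨hyP, by linarith, by linarith⟩
  obtain ⟨ht₁, ht₂⟩ := ht
  have hs : |s| ≤ max |z y| |w y| := by
    have hz₁ := abs_le.mp (le_max_left |z y| |w y|)
    have hw₁ := abs_le.mp (le_max_right |z y| |w y|)
    refine abs_le.mpr ⟨?_, ?_⟩ <;>
      nlinarith [mul_le_mul_of_nonneg_left hz₁.1 (by linarith : (0 : ℝ) ≤ 1 + t),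
        mul_le_mul_of_nonneg_left hz₁.2 (by linarith : (0 : ℝ) ≤ 1 - t),
        mul_le_mul_of_nonneg_left hw₁.1 (by linarith : (0 : ℝ) ≤ 1 - t),
        mul_le_mul_of_nonneg_left hw₁.2 (by linarith : (0 : ℝ) ≤ 1 + t)]
  rw [mem_closedBall_zero_iff]
  rcases max_choice |z y| |w y| with hmax | hmax <;> rw [hmax] at hs
  · exact (norm_add_smul_le_of_abs_le hy hs).trans (mem_closedBall_zero_iff.mp (hR hz))
  · exact (norm_add_smul_le_of_abs_le hy hs).trans (mem_closedBall_zero_iff.mp (hR hw))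

end ShadowSystem

section Polar

variable {n : ℕ}

theorem pol_subset_closedBall_inv {M : Set (EuclideanSpace ℝ (Fin n))} {r : ℝ} (hr : 0 < r)
    (h : Metric.closedBall 0 r ⊆ M) : pol M ⊆ Metric.closedBall 0 r⁻¹ := by
  intro x hx
  rw [mem_closedBall_zero_iff]
  rcases eq_or_ne x 0 with rfl | hx0
  · simpa using hr.le
  have hnx : 0 < ‖x‖ := norm_pos_iff.mpr hx0
  have hxM : (r / ‖x‖) • x ∈ M := h <| by
    rw [mem_closedBall_zero_iff, norm_smul, Real.norm_of_nonneg (by positivity),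
      div_mul_cancel₀ _ hnx.ne']
  have hle := hx _ hxM
  rw [real_inner_smul_right, real_inner_self_eq_norm_sq] at hle
  rw [← one_div, le_div_iff₀ hr]
  calc ‖x‖ * r = r / ‖x‖ * ‖x‖ ^ 2 := by field_simp
    _ ≤ 1 := hle

theorem closedBall_inv_subset_pol {M : Set (EuclideanSpace ℝ (Fin n))} {R : ℝ} (hR : 0 < R)
    (h : M ⊆ Metric.closedBall 0 R) : Metric.closedBall 0 R⁻¹ ⊆ pol M := by
  intro x hx y hy
  calc ⟪x, y⟫ ≤ ‖x‖ * ‖y‖ := real_inner_le_norm x y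
    _ ≤ R⁻¹ * R := mul_le_mul (mem_closedBall_zero_iff.mp hx) (mem_closedBall_zero_iff.mp (h hy))
        (norm_nonneg _) (by positivity)
    _ = 1 := inv_mul_cancel₀ hR.ne'

theorem vol_pol_pos {M : Set (EuclideanSpace ℝ (Fin n))} (hM : Bornology.IsBounded M)
    (h0 : 0 ∈ interior M) : 0 < vol (pol M) := by
  obtain ⟨R, hR, hMR⟩ := hM.subset_closedBall_lt 0 0
  obtain ⟨r, hr, hrM⟩ := Metric.nhds_basis_closedBall.mem_iff.mp (mem_interior_iff_mem_nhds.mp h0)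
  exact ENNReal.toReal_pos_iff.mpr
    ⟨(Metric.measure_closedBall_pos _ _ (inv_pos.mpr hR)).trans_le
      (measure_mono (closedBall_inv_subset_pol hR hMR)),
    (measure_mono (pol_subset_closedBall_inv hr hrM)).trans_lt measure_closedBall_lt_top⟩

theorem pol_preimage_linearIsometryEquiv
    (f : EuclideanSpace ℝ (Fin n) ≃ₗᵢ[ℝ] EuclideanSpace ℝ (Fin n))
    (M : Set (EuclideanSpace ℝ (Fin n))) : pol (f ⁻¹' M) = f ⁻¹' pol M := by
  ext x
  constructor
  · intro hx y hy
    have hxy := hx (f.symm y) (by rwa [mem_preimage, f.apply_symm_apply])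
    rwa [← f.inner_map_map, f.apply_symm_apply] at hxy
  · intro hx y hy
    rw [← f.inner_map_map]
    exact hx (f y) hy

theorem vol_pol_preimage_linearIsometryEquiv
    (f : EuclideanSpace ℝ (Fin n) ≃ₗᵢ[ℝ] EuclideanSpace ℝ (Fin n))
    (M : Set (EuclideanSpace ℝ (Fin n))) : vol (pol (f ⁻¹' M)) = vol (pol M) := by
  rw [vol, vol, pol_preimage_linearIsometryEquiv]
  exact congrArg _ (f.measurePreserving.measure_preimage_equiv (f := f.toMeasurableEquiv) _)

end Polar

theorem polar_volume_ge_along_steiner_of_barycentre_general {n : ℕ}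
    (e : EuclideanSpace ℝ (Fin n)) (he : ‖e‖ = 1)
    (L : Set (EuclideanSpace ℝ (Fin n)))
    (hcomp : IsCompact L)
    (h0 : (0 : EuclideanSpace ℝ (Fin n)) ∈ interior L)
    (P : Set (EuclideanSpace ℝ (Fin n)))
    (z w u : EuclideanSpace ℝ (Fin n) → ℝ)
    (hu : ∀ x, u x = (z x + w x) / 2)
    (Lt : ℝ → Set (EuclideanSpace ℝ (Fin n)))
    (hLt : ∀ t : ℝ, Lt t =
      {x : EuclideanSpace ℝ (Fin n) | (x - (inner ℝ x e : ℝ) • e) ∈ P ∧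
        z (x - (inner ℝ x e : ℝ) • e) - (1 - t) * u (x - (inner ℝ x e : ℝ) • e) ≤ (inner ℝ x e : ℝ) ∧
        (inner ℝ x e : ℝ) ≤ w (x - (inner ℝ x e : ℝ) • e) - (1 - t) * u (x - (inner ℝ x e : ℝ) • e)})
    (hL1 : Lt 1 = L)
    -- Meyer–Reisner convexity of the inverse polar volume along the shadow system
    (hMR : ConvexOn ℝ (Icc (-1 : ℝ) 1) (fun t => (vol (pol (Lt t)))⁻¹)) :
    ∀ t ∈ Icc (-1 : ℝ) 1, vol (pol L) ≤ vol (pol (Lt t)) := by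
  obtain rfl : Lt = shadowSystem e P z w := funext fun t => by rw [hLt t]; simp only [hu]; rfl
  subst hL1
  obtain ⟨R, hR⟩ := hcomp.isBounded.subset_closedBall 0
  obtain ⟨r, hr, hrL⟩ := Metric.nhds_basis_closedBall.mem_iff.mp (mem_interior_iff_mem_nhds.mp h0)
  have hpos : ∀ t ∈ Icc (-1 : ℝ) 1, 0 < vol (pol (shadowSystem e P z w t)) := fun t ht =>
    vol_pol_pos (Metric.isBounded_closedBall.subset (shadowSystem_subset_closedBall he hR ht))
      (mem_interior_iff_mem_nhds.mpr (Filter.mem_of_superset (Metric.closedBall_mem_nhds 0 hr)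
        (closedBall_subset_shadowSystem he hrL ht)))
  have hreflect : vol (pol (shadowSystem e P z w (-1))) = vol (pol (shadowSystem e P z w 1)) := by
    rw [shadowSystem_neg_one he, vol_pol_preimage_linearIsometryEquiv]
  intro t ht
  have hinv := hMR.le_on_segment (left_mem_Icc.mpr (by norm_num)) (right_mem_Icc.mpr (by norm_num))
    (by rwa [segment_eq_Icc (by norm_num)] : t ∈ segment ℝ (-1 : ℝ) 1)
  rw [hreflect, max_self] at hinv
  exact (inv_le_inv₀ (hpos t ht) (hpos 1 (right_mem_Icc.mpr (by norm_num)))).mp hinv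

/-- for the Steiner shadow system `L_t` of a convex body `L` with the origin
interior, assuming the Meyer–Reisner convexity of `t ↦ V((L_t)°)⁻¹`, that
`V((L_t)*) ≤ V((L_t)°)` with equality when the barycentre of `(L_t)°` is the origin
(characterization of the Santaló point), and `V((L_0)*) ≥ V((L_1)*)`: if the barycentre
of `L°` is the origin, then `V(L°) ≤ V((L_t)°)` for all `t ∈ [-1,1]`. -/
theorem polar_volume_ge_along_steiner_of_barycentre {n : ℕ}
    (e : EuclideanSpace ℝ (Fin n)) (he : ‖e‖ = 1)
    (L : Set (EuclideanSpace ℝ (Fin n)))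
    (hcomp : IsCompact L) (hconv : Convex ℝ L)
    (h0 : (0 : EuclideanSpace ℝ (Fin n)) ∈ interior L)
    (P : Set (EuclideanSpace ℝ (Fin n)))
    (hP : P = (fun x => x - (inner ℝ x e : ℝ) • e) '' L)
    (z w u : EuclideanSpace ℝ (Fin n) → ℝ)
    (hz : ConvexOn ℝ P z) (hw : ConcaveOn ℝ P w) (hzw : ∀ x ∈ P, z x ≤ w x)
    (hu : ∀ x, u x = (z x + w x) / 2)
    (Lt : ℝ → Set (EuclideanSpace ℝ (Fin n)))
    (hLt : ∀ t : ℝ, Lt t =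
      {x : EuclideanSpace ℝ (Fin n) | (x - (inner ℝ x e : ℝ) • e) ∈ P ∧
        z (x - (inner ℝ x e : ℝ) • e) - (1 - t) * u (x - (inner ℝ x e : ℝ) • e) ≤ (inner ℝ x e : ℝ) ∧
        (inner ℝ x e : ℝ) ≤ w (x - (inner ℝ x e : ℝ) • e) - (1 - t) * u (x - (inner ℝ x e : ℝ) • e)})
    (hL1 : Lt 1 = L)
    -- Meyer–Reisner convexity of the inverse polar volume along the shadow system
    (hMR : ConvexOn ℝ (Icc (-1 : ℝ) 1) (fun t => (vol (pol (Lt t)))⁻¹))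
    -- the volumes `sV t = V((L_t)*)` of the polars with respect to the Santaló point
    (sV : ℝ → ℝ)
    (hsV_le : ∀ t ∈ Icc (-1 : ℝ) 1, sV t ≤ vol (pol (Lt t)))
    (hsV_eq : ∀ t ∈ Icc (-1 : ℝ) 1,
      (∫ x in pol (Lt t), x ∂volume) = 0 → sV t = vol (pol (Lt t)))
    (hsV01 : sV 1 ≤ sV 0)
    -- barycentre of `L°` at the origin
    (hbar : (∫ x in pol L, x ∂volume) = 0) :
    ∀ t ∈ Icc (-1 : ℝ) 1, vol (pol L) ≤ vol (pol (Lt t)) :=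
  polar_volume_ge_along_steiner_of_barycentre_general e he L hcomp h0 P z w u hu Lt hLt hL1 hMR
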